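/- arXiv:1712.07719 — 6 statements merged into one kernel-verified Lean document; each statement's English description precedes it below -/
import Mathlib

section
/- Let F : V → ℝ be a bounded linear functional, U_h ⊆ U a subspace, V_h ⊆ V a closed subspace, and Θ_h : U → V_h the discrete trial-to-test operator with ⟨Θ_h w, v_h⟩_V = b(w, v_h) for all w ∈ U, v_h ∈ V_h. An element u_h ∈ U_h satisfies the practical DPG equations b(u_h, Θ_h w_h) = F(Θ_h w_h) for all w_h ∈ U_h if and only if there exists ε_h ∈ V_h such that ⟨ε_h, v_h⟩_V + b(u_h, v_h) = F(v_h) for all v_h ∈ V_h and b(w_h, ε_h) = 0 for all w_h ∈ U_h. Moreover, such an ε_h is unique. -/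
open scoped RealInnerProductSpace

/-- equivalence of the practical DPG method with its mixed formulation,
and uniqueness of the error function `ε_h`. -/
theorem stmt_4
    {U V : Type*} [NormedAddCommGroup U] [InnerProductSpace ℝ U] [CompleteSpace U]
    [NormedAddCommGroup V] [InnerProductSpace ℝ V] [CompleteSpace V]
    (b : U →ₗ[ℝ] V →ₗ[ℝ] ℝ) (M : ℝ) (hM : 0 < M)
    (hb : ∀ (w : U) (v : V), |b w v| ≤ M * ‖w‖ * ‖v‖)
    (F : V →L[ℝ] ℝ)
    (Uh : Submodule ℝ U) (Vh : Submodule ℝ V) (hVh : IsClosed (Vh : Set V))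
    (Θh : U →L[ℝ] Vh)
    (hΘh : ∀ (w : U) (vh : Vh), ⟪(Θh w : V), (vh : V)⟫ = b w (vh : V))
    (uh : U) (huh : uh ∈ Uh) :
    ((∀ wh ∈ Uh, b uh (Θh wh : V) = F (Θh wh : V)) ↔
      ∃ εh : Vh,
        (∀ vh : Vh, ⟪(εh : V), (vh : V)⟫ + b uh (vh : V) = F (vh : V)) ∧
        (∀ wh ∈ Uh, b wh (εh : V) = 0)) ∧
    (∀ εh εh' : Vh,
      ((∀ vh : Vh, ⟪(εh : V), (vh : V)⟫ + b uh (vh : V) = F (vh : V)) ∧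
        (∀ wh ∈ Uh, b wh (εh : V) = 0)) →
      ((∀ vh : Vh, ⟪(εh' : V), (vh : V)⟫ + b uh (vh : V) = F (vh : V)) ∧
        (∀ wh ∈ Uh, b wh (εh' : V) = 0)) →
      εh = εh') := by
  haveI : CompleteSpace Vh := hVh.completeSpace_coe
  constructor
  · constructor
    · intro hdpg
      -- build the continuous linear functional vh ↦ F vh - b uh vh on Vh
      let B : V →L[ℝ] ℝ := LinearMap.mkContinuous (b uh) (M * ‖uh‖)
        (fun v => by simpa [Real.norm_eq_abs] using hb uh v)
      let G : Vh →L[ℝ] ℝ := F.comp (Vh.subtypeL) - B.comp (Vh.subtypeL)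
      obtain ⟨εh, hεh⟩ := (InnerProductSpace.toDual ℝ Vh).surjective G
      have hrep : ∀ vh : Vh, ⟪(εh : V), (vh : V)⟫ = F (vh : V) - b uh (vh : V) := by
        intro vh
        have := congrArg (fun f => f vh) hεh
        simpa [G, B, InnerProductSpace.toDual_apply_apply, Submodule.coe_inner] using this
      refine ⟨εh, ?_, ?_⟩
      · intro vh
        rw [hrep vh]; ring
      intro wh hwh
      have h1 : b wh (εh : V) = ⟪((Θh wh : Vh) : V), (εh : V)⟫ := (hΘh wh εh).symm
      rw [h1, real_inner_comm, hrep (Θh wh), hdpg wh hwh]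
      ring
    · rintro ⟨εh, h1, h2⟩ wh hwh
      have key : ⟪(εh : V), ((Θh wh : Vh) : V)⟫ + b uh ((Θh wh : Vh) : V)
          = F ((Θh wh : Vh) : V) := h1 (Θh wh)
      have : ⟪(εh : V), ((Θh wh : Vh) : V)⟫ = 0 := by
        rw [real_inner_comm, hΘh wh εh]
        exact h2 wh hwh
      linarith [key, this]
  · rintro εh εh' ⟨h1, _⟩ ⟨h1', _⟩
    have hdiff : ∀ vh : Vh, ⟪(εh : V) - (εh' : V), (vh : V)⟫ = 0 := by
      intro vh
      have a := h1 vh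
      have a' := h1' vh
      rw [inner_sub_left]
      linarith
    have := hdiff (εh - εh')
    have hz : (εh : V) - (εh' : V) = 0 := by
      have : ⟪(εh : V) - (εh' : V), (εh : V) - (εh' : V)⟫ = 0 := by
        simpa using this
      exact inner_self_eq_zero.mp this
    have : (εh : V) = (εh' : V) := sub_eq_zero.mp hz
    exact Subtype.ext this
end

section
/- Let F : V → ℝ be a bounded linear functional, U_h ⊆ U a subspace, V_h ⊆ V a closed subspace, Θ_h : U → V_h the discrete trial-to-test operator with ⟨Θ_h w, v_h⟩_V = b(w, v_h) for all w ∈ U, v_h ∈ V_h, and let ρ_h F ∈ V_h denote the Riesz representative of F on V_h, i.e. ⟨ρ_h F, v_h⟩_V = F(v_h) for all v_h ∈ V_h. Then u_h ∈ U_h satisfies the practical DPG equations b(u_h, Θ_h w_h) = F(Θ_h w_h) for all w_h ∈ U_h if and only if ‖ρ_h F − Θ_h u_h‖_V ≤ ‖ρ_h F − Θ_h w_h‖_V for all w_h ∈ U_h. -/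
open scoped RealInnerProductSpace

/-- the practical DPG method is a minimal residual method: `u_h` solves the
practical DPG equations iff `Θ_h u_h` minimizes the distance to the discrete Riesz
representative `ρ_h F` among `Θ_h w_h`, `w_h ∈ U_h`. -/
theorem stmt_5
    {U V : Type*} [NormedAddCommGroup U] [InnerProductSpace ℝ U] [CompleteSpace U]
    [NormedAddCommGroup V] [InnerProductSpace ℝ V] [CompleteSpace V]
    (b : U →ₗ[ℝ] V →ₗ[ℝ] ℝ) (M : ℝ) (hM : 0 < M)
    (hb : ∀ (w : U) (v : V), |b w v| ≤ M * ‖w‖ * ‖v‖)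
    (F : V →L[ℝ] ℝ)
    (Uh : Submodule ℝ U) (Vh : Submodule ℝ V) (hVh : IsClosed (Vh : Set V))
    (Θh : U →L[ℝ] Vh)
    (hΘh : ∀ (w : U) (vh : Vh), ⟪(Θh w : V), (vh : V)⟫ = b w (vh : V))
    (ρF : Vh) (hρF : ∀ vh : Vh, ⟪(ρF : V), (vh : V)⟫ = F (vh : V))
    (uh : U) (huh : uh ∈ Uh) :
    (∀ wh ∈ Uh, b uh (Θh wh : V) = F (Θh wh : V)) ↔
    (∀ wh ∈ Uh, ‖(ρF : V) - (Θh uh : V)‖ ≤ ‖(ρF : V) - (Θh wh : V)‖) := by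
  set d : V := (ρF : V) - (Θh uh : V) with hd
  have key : ∀ w : U, ⟪d, (Θh w : V)⟫ = F (Θh w : V) - b uh (Θh w : V) := by
    intro w
    rw [hd, inner_sub_left, hρF (Θh w), hΘh uh (Θh w)]
  constructor
  · intro h wh hwh
    have horth : ⟪d, (Θh uh : V) - (Θh wh : V)⟫ = 0 := by
      have hco : (Θh uh : V) - (Θh wh : V) = ((Θh (uh - wh) : Vh) : V) := by
        rw [map_sub]; rfl
      rw [hco, key (uh - wh), h (uh - wh) (Submodule.sub_mem _ huh hwh)]
      ring
    have hsum : (ρF : V) - (Θh wh : V) = d + ((Θh uh : V) - (Θh wh : V)) := by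
      rw [hd]; abel
    have hsq : ‖(ρF : V) - (Θh wh : V)‖ ^ 2
        = ‖d‖ ^ 2 + ‖(Θh uh : V) - (Θh wh : V)‖ ^ 2 := by
      rw [hsum, norm_add_sq_real, horth]; ring
    nlinarith [norm_nonneg ((ρF : V) - (Θh wh : V)), norm_nonneg d,
      norm_nonneg ((Θh uh : V) - (Θh wh : V)),
      sq_nonneg (‖(Θh uh : V) - (Θh wh : V)‖)]
  · intro h wh hwh
    set e : V := (Θh wh : V) with he
    have hc : ⟪d, e⟫ = 0 := by
      have hvar : ∀ t : ℝ, ‖d‖ ^ 2 ≤ ‖d‖ ^ 2 - 2 * t * ⟪d, e⟫ + t ^ 2 * ‖e‖ ^ 2 := by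
        intro t
        have hmem : uh + t • wh ∈ Uh := Submodule.add_mem _ huh (Submodule.smul_mem _ _ hwh)
        have h1 := h (uh + t • wh) hmem
        have hco : (ρF : V) - ((Θh (uh + t • wh) : Vh) : V) = d - t • e := by
          rw [map_add, map_smul, hd, he]
          push_cast
          abel
        rw [hco] at h1
        have h2 : ‖d‖ ^ 2 ≤ ‖d - t • e‖ ^ 2 := by
          nlinarith [norm_nonneg d, norm_nonneg (d - t • e)]
        have h3 : ‖d - t • e‖ ^ 2 = ‖d‖ ^ 2 - 2 * t * ⟪d, e⟫ + t ^ 2 * ‖e‖ ^ 2 := by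
          rw [norm_sub_sq_real, real_inner_smul_right, norm_smul]
          simp [mul_pow]
          ring
        linarith [h3 ▸ h2]
      by_cases hez : ‖e‖ = 0
      · have : e = 0 := norm_eq_zero.mp hez
        simp [this]
      · have hepos : (0 : ℝ) < ‖e‖ ^ 2 := by positivity
        have h0 := hvar (⟪d, e⟫ / ‖e‖ ^ 2)
        have hEne : (‖e‖ ^ 2 : ℝ) ≠ 0 := ne_of_gt hepos
        have heq : -2 * (⟪d, e⟫ / ‖e‖ ^ 2) * ⟪d, e⟫ + (⟪d, e⟫ / ‖e‖ ^ 2) ^ 2 * ‖e‖ ^ 2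
            = -(⟪d, e⟫ ^ 2) / ‖e‖ ^ 2 := by
          field_simp
          ring
        have h1 : (0 : ℝ) ≤ -(⟪d, e⟫ ^ 2) / ‖e‖ ^ 2 := by
          rw [← heq]; linarith
        rw [le_div_iff₀ hepos] at h1
        have h2 : ⟪d, e⟫ ^ 2 = 0 := le_antisymm (by linarith) (sq_nonneg _)
        exact pow_eq_zero_iff two_ne_zero |>.mp h2
    have := key wh
    rw [← he, hc] at this
    linarith
end

section
/- Let F : V → ℝ be a bounded linear functional, U_h ⊆ U a subspace, V_h ⊆ V a closed subspace. Define the mixed bilinear form a((w,v),(δw,δv)) := b(w, δv) + ⟨v, δv⟩_V − b(δw, v) on (U × V) × (U × V). Suppose u ∈ U satisfies b(u, v) = F(v) for all v ∈ V, and suppose (u_h, ε_h) ∈ U_h × V_h satisfies ⟨ε_h, v_h⟩_V + b(u_h, v_h) = F(v_h) for all v_h ∈ V_h and b(w_h, ε_h) = 0 for all w_h ∈ U_h. Let w ∈ U and set v := Θ w, i.e. v ∈ V is the unique element with ⟨v, δv⟩_V = b(w, δv) for all δv ∈ V. Then for all w_h ∈ U_h and v_h ∈ V_h one has the identity b(u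 − u_h, v) = a((u − u_h, −ε_h), (w − w_h, v − v_h)). -/
open scoped RealInnerProductSpace

/-- the key duality identity
`b(u − u_h, v) = a((u − u_h, −ε_h), (w − w_h, v − v_h))` with `v = Θ w`, where
`a((w,v),(δw,δv)) = b(w, δv) + ⟨v, δv⟩_V − b(δw, v)`. -/
theorem stmt_8
    {U V : Type*} [NormedAddCommGroup U] [InnerProductSpace ℝ U] [CompleteSpace U]
    [NormedAddCommGroup V] [InnerProductSpace ℝ V] [CompleteSpace V]
    (b : U →ₗ[ℝ] V →ₗ[ℝ] ℝ) (M : ℝ) (hM : 0 < M)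
    (hb : ∀ (w : U) (v : V), |b w v| ≤ M * ‖w‖ * ‖v‖)
    (F : V →L[ℝ] ℝ)
    (Uh : Submodule ℝ U) (Vh : Submodule ℝ V) (hVh : IsClosed (Vh : Set V))
    (u : U) (hu : ∀ v : V, b u v = F v)
    (uh : U) (huh : uh ∈ Uh) (εh : Vh)
    (h1 : ∀ vh : Vh, ⟪(εh : V), (vh : V)⟫ + b uh (vh : V) = F (vh : V))
    (h2 : ∀ wh ∈ Uh, b wh (εh : V) = 0)
    (w : U) (v : V) (hv : ∀ δv : V, ⟪v, δv⟫ = b w δv) :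
    ∀ wh ∈ Uh, ∀ vh : Vh,
      b (u - uh) v =
        b (u - uh) (v - (vh : V)) + ⟪-(εh : V), v - (vh : V)⟫
          - b (w - wh) (-(εh : V)) := by
  intro wh hwh vh
  have e1 := h1 vh
  have e2 := h2 wh hwh
  have e3 := hu ((vh : V))
  have e4 := hv (εh : V)
  have e5 : ⟪(εh : V), v⟫ = ⟪v, (εh : V)⟫ := real_inner_comm _ _
  simp only [map_sub, LinearMap.sub_apply, map_neg, LinearMap.neg_apply,
    inner_sub_right, inner_neg_left] at *
  linarith
end

section
/- Let F : V → ℝ be a bounded linear functional, U_h ⊆ U a subspace, V_h ⊆ V a closed subspace. Suppose u ∈ U satisfies b(u, v) = F(v) for all v ∈ V, and suppose (u_h, ε_h) ∈ U_h × V_h satisfies ⟨ε_h, v_h⟩_V + b(u_h, v_h) = F(v_h) for all v_h ∈ V_h and b(w_h, ε_h) = 0 for all w_h ∈ U_h. Let w ∈ U and let v := Θ w ∈ V be the unique element with ⟨v, δv⟩_V = b(w, δv) for all δv ∈ V. Then for all w_h ∈ U_h and v_h ∈ V_h, |b(u − u_h, v)| ≤ (1 + M)² ‖u − u_h‖_U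 (‖w − w_h‖_U + ‖v − v_h‖_V). -/
open scoped RealInnerProductSpace

/-- the abstract core of Lemma 3.2: the duality pairing of the error with the
optimal test function `v = Θ w` is controlled by the error times the best-approximation
errors of `w` and `v`. -/
theorem stmt_9
    {U V : Type*} [NormedAddCommGroup U] [InnerProductSpace ℝ U] [CompleteSpace U]
    [NormedAddCommGroup V] [InnerProductSpace ℝ V] [CompleteSpace V]
    (b : U →ₗ[ℝ] V →ₗ[ℝ] ℝ) (M : ℝ) (hM : 0 < M)
    (hb : ∀ (w : U) (v : V), |b w v| ≤ M * ‖w‖ * ‖v‖)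
    (F : V →L[ℝ] ℝ)
    (Uh : Submodule ℝ U) (Vh : Submodule ℝ V) (hVh : IsClosed (Vh : Set V))
    (u : U) (hu : ∀ v : V, b u v = F v)
    (uh : U) (huh : uh ∈ Uh) (εh : Vh)
    (h1 : ∀ vh : Vh, ⟪(εh : V), (vh : V)⟫ + b uh (vh : V) = F (vh : V))
    (h2 : ∀ wh ∈ Uh, b wh (εh : V) = 0)
    (w : U) (v : V) (hv : ∀ δv : V, ⟪v, δv⟫ = b w δv) :
    ∀ wh ∈ Uh, ∀ vh : Vh,
      |b (u - uh) v| ≤ (1 + M) ^ 2 * ‖u - uh‖ * (‖w - wh‖ + ‖v - (vh : V)‖) := by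
  intro wh hwh vh
  set ε : V := (εh : V) with hε
  set e : U := u - uh with he
  -- key1 : for all vh, ⟪ε, vh⟫ = b e vh
  have key1 : ∀ x : Vh, ⟪ε, (x : V)⟫ = b e (x : V) := by
    intro x
    have := h1 x
    have hux := hu (x : V)
    simp only [he, map_sub, LinearMap.sub_apply]
    linarith
  -- bound on ‖ε‖
  have hεbound : ‖ε‖ ≤ M * ‖e‖ := by
    have h := key1 εh
    have h2' : ⟪ε, ε⟫ = ‖ε‖ ^ 2 := real_inner_self_eq_norm_sq ε
    have hb' := hb e ε
    have habs : b e ε ≤ M * ‖e‖ * ‖ε‖ := (abs_le.mp hb').2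
    have hsq : ‖ε‖ ^ 2 ≤ M * ‖e‖ * ‖ε‖ := by rw [← h2', h]; exact habs
    rcases eq_or_lt_of_le (norm_nonneg ε) with h0 | h0
    · rw [← h0]; positivity
    · have := (mul_le_mul_iff_of_pos_right h0).mp (by nlinarith : ‖ε‖ * ‖ε‖ ≤ (M * ‖e‖) * ‖ε‖)
      exact this
  -- identity
  have hid : b e v = b e (v - (vh : V)) + ⟪ε, (vh : V) - v⟫ + b (w - wh) ε := by
    have hεv : ⟪ε, v⟫ = b w ε := by
      rw [real_inner_comm]; exact hv ε
    have hεvh : ⟪ε, (vh : V)⟫ = b e (vh : V) := key1 vh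
    have hwh0 : b wh ε = 0 := h2 wh hwh
    simp only [map_sub, LinearMap.sub_apply, inner_sub_right]
    rw [hεv, hεvh, hwh0]
    ring
  have t1 : |b e (v - (vh : V))| ≤ M * ‖e‖ * ‖v - (vh : V)‖ := hb _ _
  have t2 : |⟪ε, (vh : V) - v⟫| ≤ ‖ε‖ * ‖(vh : V) - v‖ := abs_real_inner_le_norm _ _
  have t3 : |b (w - wh) ε| ≤ M * ‖w - wh‖ * ‖ε‖ := hb _ _
  have hnorm : ‖(vh : V) - v‖ = ‖v - (vh : V)‖ := norm_sub_rev _ _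
  have htri : |b e v| ≤ |b e (v - (vh : V))| + |⟪ε, (vh : V) - v⟫| + |b (w - wh) ε| := by
    rw [hid]; exact (abs_add_le _ _).trans (by gcongr; exact abs_add_le _ _)
  have h5 : |b e v| ≤ M * ‖e‖ * ‖v - (vh : V)‖ + (M * ‖e‖) * ‖v - (vh : V)‖
      + M * ‖w - wh‖ * (M * ‖e‖) := by
    have t2' : |⟪ε, (vh : V) - v⟫| ≤ (M * ‖e‖) * ‖v - (vh : V)‖ := by
      rw [hnorm] at t2
      calc |⟪ε, (vh : V) - v⟫| ≤ ‖ε‖ * ‖v - (vh : V)‖ := t2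
        _ ≤ (M * ‖e‖) * ‖v - (vh : V)‖ := by gcongr
    have t3' : |b (w - wh) ε| ≤ M * ‖w - wh‖ * (M * ‖e‖) := by
      calc |b (w - wh) ε| ≤ M * ‖w - wh‖ * ‖ε‖ := t3
        _ ≤ M * ‖w - wh‖ * (M * ‖e‖) := by
            have : (0:ℝ) ≤ M * ‖w - wh‖ := by positivity
            exact mul_le_mul_of_nonneg_left hεbound this
    linarith
  have hne : (0:ℝ) ≤ ‖e‖ := norm_nonneg _
  have hnw : (0:ℝ) ≤ ‖w - wh‖ := norm_nonneg _
  have hnv : (0:ℝ) ≤ ‖v - (vh : V)‖ := norm_nonneg _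
  nlinarith [mul_nonneg hne hnw, mul_nonneg hne hnv, sq_nonneg M, mul_nonneg (mul_nonneg hne hnw) (sq_nonneg M), mul_nonneg (mul_nonneg hne hnv) (mul_nonneg hM.le hM.le)]
end

section
/- Let U_h ⊆ U be a finite-dimensional subspace and V_h ⊆ V a closed subspace, and suppose the discrete inf–sup condition holds: there is γ_h > 0 with sup{ b(u_h, v_h)/‖v_h‖_V : v_h ∈ V_h, v_h ≠ 0 } ≥ γ_h ‖u_h‖_U for all u_h ∈ U_h. Then for every bounded linear functional F : V → ℝ the mixed DPG system — find (u_h, ε_h) ∈ U_h × V_h with ⟨ε_h, v_h⟩_V + b(u_h, v_h) = F(v_h) for all v_h ∈ V_h and b(w_h, ε_h) = 0 for all w_h ∈ U_h — has exactly one solution. -/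
open scoped RealInnerProductSpace

set_option maxHeartbeats 1000000 in
/-- under the discrete inf–sup condition, the mixed DPG system has a unique
solution `(u_h, ε_h) ∈ U_h × V_h` for every bounded linear functional `F`. -/
theorem stmt_11
    {U V : Type*} [NormedAddCommGroup U] [InnerProductSpace ℝ U] [CompleteSpace U]
    [NormedAddCommGroup V] [InnerProductSpace ℝ V] [CompleteSpace V]
    (b : U →ₗ[ℝ] V →ₗ[ℝ] ℝ) (M : ℝ) (hM : 0 < M)
    (hb : ∀ (w : U) (v : V), |b w v| ≤ M * ‖w‖ * ‖v‖)
    (Uh : Submodule ℝ U) (hUh : FiniteDimensional ℝ Uh)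
    (Vh : Submodule ℝ V) (hVh : IsClosed (Vh : Set V))
    (γh : ℝ) (hγh : 0 < γh)
    (hinfsup : ∀ uh ∈ Uh,
      γh * ‖uh‖ ≤ sSup {r : ℝ | ∃ vh : Vh, vh ≠ 0 ∧ r = b uh (vh : V) / ‖(vh : V)‖}) :
    ∀ F : V →L[ℝ] ℝ,
      ∃! p : Uh × Vh,
        (∀ vh : Vh, ⟪(p.2 : V), (vh : V)⟫ + b (p.1 : U) (vh : V) = F (vh : V)) ∧
        (∀ wh : Uh, b (wh : U) (p.2 : V) = 0) := by
  intro F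
  haveI : CompleteSpace Vh := hVh.completeSpace_coe
  -- Riesz representation of `b u` restricted to `Vh`
  have hbd : ∀ u : U, ∀ v : Vh, ‖((b u).comp Vh.subtype) v‖ ≤ M * ‖u‖ * ‖v‖ := by
    intro u v
    simpa using hb u (v : V)
  let Φ : U → (Vh →L[ℝ] ℝ) := fun u =>
    LinearMap.mkContinuous ((b u).comp Vh.subtype) (M * ‖u‖) (hbd u)
  have hΦ : ∀ (u : U) (v : Vh), Φ u v = b u (v : V) := fun _ _ => rfl
  let R : Uh → Vh := fun u => (InnerProductSpace.toDual ℝ Vh).symm (Φ (u : U))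
  have hR : ∀ (u : Uh) (v : Vh), ⟪R u, v⟫ = b (u : U) (v : V) := fun u v =>
    InnerProductSpace.toDual_symm_apply
  have hRadd : ∀ u u' : Uh, R (u + u') = R u + R u' := by
    intro u u'
    apply ext_inner_right ℝ
    intro v
    rw [inner_add_left, hR, hR, hR, Submodule.coe_add, map_add, LinearMap.add_apply]
  have hRsmul : ∀ (c : ℝ) (u : Uh), R (c • u) = c • R u := by
    intro c u
    apply ext_inner_right ℝ
    intro v
    rw [real_inner_smul_left, hR, hR, Submodule.coe_smul, map_smul, LinearMap.smul_apply,
      smul_eq_mul]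
  let B : Uh →ₗ[ℝ] Vh :=
    { toFun := R, map_add' := hRadd, map_smul' := hRsmul }
  have hB : ∀ (u : Uh) (v : Vh), ⟪B u, v⟫ = b (u : U) (v : V) := hR
  -- inf-sup gives lower bound on ‖B u‖, hence injectivity
  have hlow : ∀ u : Uh, γh * ‖u‖ ≤ ‖B u‖ := by
    intro u
    refine (hinfsup (u : U) u.2).trans (Real.sSup_le ?_ (norm_nonneg _))
    rintro r ⟨vh, hvh, rfl⟩
    have hv : (0 : ℝ) < ‖(vh : V)‖ := by
      have : (vh : V) ≠ 0 := fun h => hvh (Subtype.ext h)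
      simpa [norm_pos_iff] using this
    rw [div_le_iff₀ hv]
    calc b (u : U) (vh : V) = ⟪B u, vh⟫ := (hB u vh).symm
      _ ≤ ‖B u‖ * ‖vh‖ := real_inner_le_norm _ _
      _ = ‖B u‖ * ‖(vh : V)‖ := rfl
  have hinj : ∀ u : Uh, B u = 0 → u = 0 := by
    intro u hu
    have := hlow u
    rw [hu, norm_zero] at this
    have : ‖u‖ ≤ 0 := by nlinarith [norm_nonneg u]
    simpa [norm_le_zero_iff] using this
  -- Riesz representation of F on Vh
  let f : Vh := (InnerProductSpace.toDual ℝ Vh).symm (F.comp Vh.subtypeL)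
  have hf : ∀ v : Vh, ⟪f, v⟫ = F (v : V) := fun v => InnerProductSpace.toDual_symm_apply
  -- the range of B
  set W : Submodule ℝ Vh := LinearMap.range B with hW
  haveI : FiniteDimensional ℝ W := Module.Finite.range B
  haveI : CompleteSpace W := FiniteDimensional.complete ℝ W
  obtain ⟨u₀, hu₀⟩ : ∃ u₀ : Uh, B u₀ = (Submodule.orthogonalProjection W f : Vh) :=
    LinearMap.mem_range.mp (Submodule.orthogonalProjection W f).2
  set ε₀ : Vh := f - B u₀ with hε₀
  have hperp : f - B u₀ ∈ Wᗮ := by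
    rw [hu₀]; exact Submodule.sub_starProjection_mem_orthogonal (K := W) f
  refine ⟨(u₀, ε₀), ⟨?_, ?_⟩, ?_⟩
  · intro vh
    have h1 : ⟪((ε₀ : Vh) : V), (vh : V)⟫ = ⟪ε₀, vh⟫ := (Submodule.coe_inner Vh ε₀ vh).symm
    rw [h1, hε₀, inner_sub_left, ← hB u₀ vh, ← hf vh]
    ring
  · intro wh
    have := hperp (B wh) (LinearMap.mem_range.mpr ⟨wh, rfl⟩)
    rw [← hB wh ε₀, hε₀]
    simpa [real_inner_comm] using this
  · rintro ⟨u', ε'⟩ ⟨h1, h2⟩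
    -- first, ε' = f - B u'
    have hε' : ε' = f - B u' := by
      apply ext_inner_right ℝ
      intro v
      have := h1 v
      rw [← Submodule.coe_inner] at this
      rw [inner_sub_left, hB, hf]
      linarith
    -- second, f - B u' ∈ Wᗮ
    have hperp' : f - B u' ∈ Wᗮ := by
      intro w hw
      obtain ⟨wh, rfl⟩ := LinearMap.mem_range.mp hw
      have := h2 wh
      rw [← hB wh ε', hε'] at this
      exact this
    have hmem : B u' ∈ W := ⟨u', rfl⟩
    have : (Submodule.orthogonalProjection W f : Vh) = B u' :=
      Submodule.eq_starProjection_of_mem_orthogonal (K := W) (u := f) hmem hperp'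
    have huu : u' = u₀ := by
      have hBu : B (u' - u₀) = 0 := by
        rw [map_sub, hu₀, this, sub_self]
      have := hinj _ hBu
      rwa [sub_eq_zero] at this
    have hee : ε' = ε₀ := by rw [hε', huu, hε₀]
    exact Prod.ext huu hee
end

section
/- Let U_h ⊆ U be a finite-dimensional subspace and V_h ⊆ V a closed subspace, and let Θ_h : U → V_h be the discrete trial-to-test operator with ⟨Θ_h w, v_h⟩_V = b(w, v_h) for all w ∈ U, v_h ∈ V_h. Let γ > 0 and assume sup{ b(u', v)/‖v‖_V : v ∈ V, v ≠ 0 } ≥ γ ‖u'‖_U for every u' ∈ U_h; assume there exists a Fortin operator, i.e. a bounded linear operator Π_F : V → V_h with ‖Π_F v‖_V ≤ C_F ‖v‖_V for all v ∈ V and b(u', v) = b(u', Π_F v) for all u' ∈ U_h, v ∈ V. Let F : V → ℝ be bounded linear and let u ∈ U satisfy b(u, v) = F(v) for all v ∈ V. Then there is a unique u_h ∈ U_h with b(u_h, Θ_h w_h) = F(Θ_h w_h) for all w_h ∈ U_h (the practical DPG solution), and it is quasi-optimal: ‖u − u_h‖_U ≤ (1 + 2 M C_F / γ) ‖u − w_h‖_U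 for every w_h ∈ U_h. -/
open scoped RealInnerProductSpace

/-- abstract form of Proposition 2.1: under the continuous inf–sup condition
and the existence of a Fortin operator, the practical DPG method has a unique solution
`u_h ∈ U_h`, and it is quasi-optimal with constant `1 + 2 M C_F / γ`. -/
theorem stmt_12
    {U V : Type*} [NormedAddCommGroup U] [InnerProductSpace ℝ U] [CompleteSpace U]
    [NormedAddCommGroup V] [InnerProductSpace ℝ V] [CompleteSpace V]
    (b : U →ₗ[ℝ] V →ₗ[ℝ] ℝ) (M : ℝ) (hM : 0 < M)
    (hb : ∀ (w : U) (v : V), |b w v| ≤ M * ‖w‖ * ‖v‖)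
    (Uh : Submodule ℝ U) (hUh : FiniteDimensional ℝ Uh)
    (Vh : Submodule ℝ V) (hVh : IsClosed (Vh : Set V))
    (Θh : U →L[ℝ] Vh)
    (hΘh : ∀ (w : U) (vh : Vh), ⟪(Θh w : V), (vh : V)⟫ = b w (vh : V))
    (γ C_F : ℝ) (hγ : 0 < γ) (hCF : 0 < C_F)
    (hinfsup : ∀ u' ∈ Uh,
      γ * ‖u'‖ ≤ sSup {r : ℝ | ∃ v : V, v ≠ 0 ∧ r = b u' v / ‖v‖})
    (PiF : V →L[ℝ] Vh)
    (hPiF1 : ∀ v : V, ‖(PiF v : V)‖ ≤ C_F * ‖v‖)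
    (hPiF2 : ∀ u' ∈ Uh, ∀ v : V, b u' v = b u' (PiF v : V))
    (F : V →L[ℝ] ℝ) (u : U) (hu : ∀ v : V, b u v = F v) :
    ∃ uh : Uh,
      (∀ wh : Uh, b (uh : U) (Θh (wh : U) : V) = F (Θh (wh : U) : V)) ∧
      (∀ uh' : Uh,
        (∀ wh : Uh, b (uh' : U) (Θh (wh : U) : V) = F (Θh (wh : U) : V)) → uh' = uh) ∧
      (∀ wh : Uh, ‖u - (uh : U)‖ ≤ (1 + 2 * M * C_F / γ) * ‖u - (wh : U)‖) := by
  haveI := hUh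
  -- key discrete stability bound: γ‖x‖ ≤ C_F ‖Θh x‖ for x ∈ Uh
  have key : ∀ x : U, x ∈ Uh → γ * ‖x‖ ≤ C_F * ‖(Θh x : V)‖ := by
    intro x hx
    refine le_trans (hinfsup x hx) (Real.sSup_le ?_ (by positivity))
    rintro r ⟨v, hv, rfl⟩
    have hvpos : 0 < ‖v‖ := norm_pos_iff.mpr hv
    rw [div_le_iff₀ hvpos, hPiF2 x hx v, ← hΘh x (PiF v)]
    have h1 := real_inner_le_norm (Θh x : V) (PiF v : V)
    have h2 := hPiF1 v
    nlinarith [norm_nonneg (Θh x : V), norm_nonneg (PiF v : V)]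
  have keyU : ∀ x : Uh, γ * ‖x‖ ≤ C_F * ‖(Θh (x : U) : V)‖ := fun x => key x x.2
  -- the Galerkin bilinear form on Uh as a map to the dual
  let S : Uh →ₗ[ℝ] Module.Dual ℝ Uh :=
    { toFun := fun x =>
        { toFun := fun w => ⟪(Θh (x : U) : V), (Θh (w : U) : V)⟫
          map_add' := by
            intro a c
            simp [inner_add_right]
          map_smul' := by
            intro m a
            simp [inner_smul_right] }
      map_add' := by
        intro a c
        ext w
        simp [inner_add_left]
      map_smul' := by
        intro m a
        ext w
        simp [inner_smul_left] }
  have Szero : ∀ x : Uh, (Θh (x : U) : V) = 0 → x = 0 := by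
    intro x hx
    have := keyU x
    rw [hx, norm_zero, mul_zero] at this
    have : ‖x‖ ≤ 0 := by nlinarith
    simpa using le_antisymm this (norm_nonneg x)
  have Sinj : Function.Injective S := by
    rw [← LinearMap.ker_eq_bot, LinearMap.ker_eq_bot']
    intro x hx
    have h0 : (S x) x = 0 := by rw [hx]; rfl
    have h0' : ⟪(Θh (x : U) : V), (Θh (x : U) : V)⟫ = (0 : ℝ) := h0
    exact Szero x (inner_self_eq_zero.mp h0')
  have Ssurj : Function.Surjective S :=
    (LinearMap.injective_iff_surjective_of_finrank_eq_finrank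
      Subspace.dual_finrank_eq.symm).mp Sinj
  -- the right-hand side functional
  obtain ⟨uh, huh⟩ := Ssurj
    { toFun := fun w => F (Θh (w : U) : V)
      map_add' := by intro a c; simp
      map_smul' := by intro m a; simp }
  have heq : ∀ wh : Uh, ⟪(Θh (uh : U) : V), (Θh (wh : U) : V)⟫ = F (Θh (wh : U) : V) := by
    intro wh
    have := congrFun (congrArg (fun f => f.toFun) huh) wh
    exact this
  have hsol : ∀ wh : Uh, b (uh : U) (Θh (wh : U) : V) = F (Θh (wh : U) : V) := by
    intro wh
    rw [← hΘh (uh : U) (Θh (wh : U))]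
    exact heq wh
  refine ⟨uh, hsol, ?_, ?_⟩
  · -- uniqueness
    intro uh' hsol'
    have hdiff : ∀ wh : Uh, ⟪(Θh ((uh' : U) - (uh : U)) : V), (Θh (wh : U) : V)⟫ = 0 := by
      intro wh
      have h1 : b ((uh' : U) - (uh : U)) (Θh (wh : U) : V) = 0 := by
        simp [map_sub, hsol wh, hsol' wh]
      rw [hΘh _ (Θh (wh : U))]
      exact h1
    have h0 := hdiff (uh' - uh)
    rw [Submodule.coe_sub] at h0
    have hz : (Θh ((uh' : U) - (uh : U)) : V) = 0 := inner_self_eq_zero.mp h0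
    have hz' : (Θh ((uh' - uh : Uh) : U) : V) = 0 := by rw [Submodule.coe_sub]; exact hz
    have : uh' - uh = 0 := Szero (uh' - uh) hz'
    exact sub_eq_zero.mp this
  · -- quasi-optimality
    intro wh
    have hzUh : (wh : U) - (uh : U) ∈ Uh := Uh.sub_mem wh.2 uh.2
    have h1 : b (uh : U) (Θh ((wh : U) - (uh : U)) : V)
        = b u (Θh ((wh : U) - (uh : U)) : V) := by
      have h := hsol ⟨(wh : U) - (uh : U), hzUh⟩
      rw [← hu] at h
      simpa using h
    have hGal : b ((wh : U) - (uh : U)) (Θh ((wh : U) - (uh : U)) : V)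
        = b ((wh : U) - u) (Θh ((wh : U) - (uh : U)) : V) := by
      calc b ((wh : U) - (uh : U)) (Θh ((wh : U) - (uh : U)) : V)
          = b (wh : U) (Θh ((wh : U) - (uh : U)) : V)
            - b (uh : U) (Θh ((wh : U) - (uh : U)) : V) := by
            rw [map_sub b (wh : U) (uh : U), LinearMap.sub_apply]
        _ = b (wh : U) (Θh ((wh : U) - (uh : U)) : V)
            - b u (Θh ((wh : U) - (uh : U)) : V) := by rw [h1]
        _ = b ((wh : U) - u) (Θh ((wh : U) - (uh : U)) : V) := by
            rw [map_sub b (wh : U) u, LinearMap.sub_apply]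
    have hnorm2 : ‖(Θh ((wh : U) - (uh : U)) : V)‖ ^ 2
        = b ((wh : U) - u) (Θh ((wh : U) - (uh : U)) : V) := by
      rw [← hGal, ← hΘh ((wh : U) - (uh : U)) (Θh ((wh : U) - (uh : U)))]
      exact (real_inner_self_eq_norm_sq _).symm
    have hΘbd : ‖(Θh ((wh : U) - (uh : U)) : V)‖ ≤ M * ‖(wh : U) - u‖ := by
      have habs := (abs_le.mp (hb ((wh : U) - u) (Θh ((wh : U) - (uh : U)) : V))).2
      rcases eq_or_lt_of_le (norm_nonneg (Θh ((wh : U) - (uh : U)) : V)) with h | h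
      · rw [← h]; positivity
      · nlinarith
    have hsymm : ‖(wh : U) - u‖ = ‖u - (wh : U)‖ := norm_sub_rev _ _
    rw [hsymm] at hΘbd
    have hzbd : ‖(wh : U) - (uh : U)‖ ≤ M * C_F / γ * ‖u - (wh : U)‖ := by
      have hk := key _ hzUh
      rw [div_mul_eq_mul_div, le_div_iff₀ hγ]
      have hk2 := mul_le_mul_of_nonneg_left hΘbd hCF.le
      linarith
    have htri : ‖u - (uh : U)‖ ≤ ‖u - (wh : U)‖ + ‖(wh : U) - (uh : U)‖ := by
      have he : u - (uh : U) = (u - (wh : U)) + ((wh : U) - (uh : U)) := by abel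
      rw [he]; exact norm_add_le _ _
    have hpos : 0 ≤ M * C_F / γ := by positivity
    have hfac : M * C_F / γ ≤ 2 * M * C_F / γ := by
      have he : 2 * M * C_F / γ = M * C_F / γ + M * C_F / γ := by ring
      rw [he]; linarith
    calc ‖u - (uh : U)‖ ≤ ‖u - (wh : U)‖ + ‖(wh : U) - (uh : U)‖ := htri
      _ ≤ ‖u - (wh : U)‖ + M * C_F / γ * ‖u - (wh : U)‖ := by linarith
      _ = (1 + M * C_F / γ) * ‖u - (wh : U)‖ := by ring
      _ ≤ (1 + 2 * M * C_F / γ) * ‖u - (wh : U)‖ := by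
          have h := mul_le_mul_of_nonneg_right hfac (norm_nonneg (u - (wh : U)))
          linarith
end
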